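/- arXiv:2210.01566 — 2 statements merged into one kernel-verified Lean document; each statement's English description precedes it below -/
import Mathlib

section
/- (Theorem 5.8.) Let A : H →ₗ[K] H be a K-linear map, not assumed continuous, which is surjective and inner-product-preserving: ⟪A x, A y⟫ = ⟪x, y⟫ for all x, y : H. Then A is continuous and bijective, and there exists a continuous K-linear map B : H →L[K] H with B (A x) = x and A (B x) = x for all x (so A is a top-linear isomorphism), satisfying ⟪x, A y⟫ = ⟪B x, y⟫ for all x, y (so A is adjointable with adjoint A* = A⁻¹ = B). Moreover, if T : H →L[K] H is the continuous linear map with underlying function A, then ‖T‖ = ‖B‖ and 1 ≤ ‖T‖. -/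
open Filter

noncomputable section

variable (K : Type*) [NontriviallyNormedField K] [IsUltrametricDist K]
  [CompleteSpace K] [StarRing K] [NormedStarGroup K]

/-- The p-adic coordinate Hilbert space: zero-convergent sequences in `K` with sup norm. -/
abbrev H := ZeroAtInftyContinuousMap ℕ K

/-- The standard basis vectors of `H K`. -/
def e (n : ℕ) : H K where
  toFun := fun m => if m = n then 1 else 0
  continuous_toFun := continuous_of_discreteTopology
  zero_at_infty' := by
    rw [cocompact_eq_atTop]
    refine Filter.Tendsto.congr' ?_ tendsto_const_nhds
    filter_upwards [Filter.eventually_gt_atTop n] with m hm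
    simp [Nat.ne_of_gt hm]

/-- The canonical inner product on `H K`: `⟪x, y⟫ = ∑' i, star (x i) * y i`. -/
def inner' (x y : H K) : K := ∑' i, star (x i) * y i

/-- A bounded operator is of trace class if its matrix entries vanish along the
cofinite filter of `ℕ × ℕ`. -/
def IsTraceClass (T : H K →L[K] H K) : Prop :=
  Tendsto (fun q : ℕ × ℕ => (T (e K q.2)) q.1) Filter.cofinite (nhds 0)

/-! An `inner'`-preserving surjection `A` has its inverse `B` as formal adjoint. Reading
coordinates as `(A y) n = ⟪B (e n), y⟫` shows that the graph of `A` is closed, so `A` is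
continuous by the closed graph theorem, and that `‖A‖ ≤ sup ‖B (e n)‖ ≤ ‖B‖`; by symmetry
`‖A‖ = ‖B‖`, and `1 = ‖B A‖ ≤ ‖A‖ ‖B‖` gives `1 ≤ ‖A‖`. -/

section SupNorm

open scoped ZeroAtInfty

variable {α β : Type*} [TopologicalSpace α] [NormedAddCommGroup β]

lemma ZeroAtInftyContinuousMap.norm_apply_le_norm (x : C₀(α, β)) (i : α) : ‖x i‖ ≤ ‖x‖ := by
  rw [← norm_toBCF_eq_norm]
  exact x.toBCF.norm_coe_le_norm i

lemma ZeroAtInftyContinuousMap.norm_le_of_forall_norm_apply_le (x : C₀(α, β)) {C : ℝ}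
    (hC : 0 ≤ C) (h : ∀ i, ‖x i‖ ≤ C) : ‖x‖ ≤ C := by
  rw [← norm_toBCF_eq_norm]
  exact (BoundedContinuousFunction.norm_le hC).mpr h

end SupNorm

open ZeroAtInftyContinuousMap

section Inner

variable {𝕜 : Type*} [NontriviallyNormedField 𝕜]

lemma norm_e (n : ℕ) : ‖e 𝕜 n‖ = 1 := by
  refine le_antisymm (norm_le_of_forall_norm_apply_le _ zero_le_one fun i => ?_) ?_
  · by_cases hi : i = n <;> simp [e, hi]
  · simpa [e] using norm_apply_le_norm (e 𝕜 n) n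

instance : Nontrivial (H 𝕜) :=
  ⟨⟨e 𝕜 0, 0, fun h => by simpa [h] using norm_e (𝕜 := 𝕜) 0⟩⟩

variable [StarRing 𝕜]

lemma inner'_e_left (n : ℕ) (y : H 𝕜) : inner' 𝕜 (e 𝕜 n) y = y n := by
  rw [inner', tsum_eq_single n fun m hm => by simp [e, hm]]
  simp [e]

lemma inner'_e_right (x : H 𝕜) (n : ℕ) : inner' 𝕜 x (e 𝕜 n) = star (x n) := by
  rw [inner', tsum_eq_single n fun m hm => by simp [e, hm]]
  simp [e]

lemma inner'_zero_left (y : H 𝕜) : inner' 𝕜 0 y = 0 := by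
  simp [inner']

variable [IsUltrametricDist 𝕜] [NormedStarGroup 𝕜]

lemma summable_inner' [CompleteSpace 𝕜] (x y : H 𝕜) : Summable fun i => star (x i) * y i := by
  apply NonarchimedeanAddGroup.summable_of_tendsto_cofinite_zero
  rw [Nat.cofinite_eq_atTop, ← cocompact_eq_atTop]
  have hx : Tendsto (fun i => star (x i)) (cocompact ℕ) (nhds 0) := by
    simpa [Function.comp_def] using (continuous_star.tendsto (0 : 𝕜)).comp (zero_at_infty x)
  simpa using hx.mul (zero_at_infty y)

lemma norm_inner'_le (x y : H 𝕜) : ‖inner' 𝕜 x y‖ ≤ ‖x‖ * ‖y‖ := by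
  refine (IsUltrametricDist.norm_tsum_le _).trans (Real.iSup_le (fun i => ?_) (by positivity))
  rw [norm_mul, norm_star]
  exact mul_le_mul (norm_apply_le_norm x i) (norm_apply_le_norm y i) (norm_nonneg _)
    (norm_nonneg _)

variable [CompleteSpace 𝕜]

lemma inner'_sub_right (w x y : H 𝕜) : inner' 𝕜 w (x - y) = inner' 𝕜 w x - inner' 𝕜 w y := by
  rw [inner', inner', inner', ← (summable_inner' w x).tsum_sub (summable_inner' w y)]
  simp [mul_sub]

lemma continuous_inner'_right (w : H 𝕜) : Continuous fun x => inner' 𝕜 w x := by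
  refine (LipschitzWith.of_dist_le_mul (K := ‖w‖₊) fun x y => ?_).continuous
  rw [dist_eq_norm, dist_eq_norm, ← inner'_sub_right, coe_nnnorm]
  exact norm_inner'_le w (x - y)

end Inner

section Adjoint

variable {𝕜 : Type*} [NontriviallyNormedField 𝕜] [StarRing 𝕜]

lemma apply_eq_inner'_of_adjoint {A B : H 𝕜 → H 𝕜}
    (h : ∀ x y, inner' 𝕜 x (A y) = inner' 𝕜 (B x) y) (y : H 𝕜) (n : ℕ) :
    A y n = inner' 𝕜 (B (e 𝕜 n)) y := by
  rw [← h, inner'_e_left]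

lemma injective_of_inner'_map_map (A : H 𝕜 →ₗ[𝕜] H 𝕜)
    (hip : ∀ x y, inner' 𝕜 (A x) (A y) = inner' 𝕜 x y) : Function.Injective A := by
  refine (injective_iff_map_eq_zero A).mpr fun x hx => ZeroAtInftyContinuousMap.ext fun n => ?_
  have h := hip x (e 𝕜 n)
  rw [hx, inner'_zero_left, inner'_e_right] at h
  simpa using h.symm

variable [IsUltrametricDist 𝕜] [NormedStarGroup 𝕜]

lemma opNorm_le_of_inner'_adjoint (T B : H 𝕜 →L[𝕜] H 𝕜)
    (h : ∀ x y, inner' 𝕜 x (T y) = inner' 𝕜 (B x) y) : ‖T‖ ≤ ‖B‖ := by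
  refine T.opNorm_le_bound (norm_nonneg B) fun y =>
    norm_le_of_forall_norm_apply_le _ (by positivity) fun n => ?_
  rw [apply_eq_inner'_of_adjoint h]
  calc ‖inner' 𝕜 (B (e 𝕜 n)) y‖ ≤ ‖B (e 𝕜 n)‖ * ‖y‖ := norm_inner'_le _ _
    _ ≤ ‖B‖ * ‖y‖ := by
      gcongr
      simpa [norm_e] using B.le_opNorm (e 𝕜 n)

lemma continuous_of_inner'_adjoint [CompleteSpace 𝕜] (A B : H 𝕜 →ₗ[𝕜] H 𝕜)
    (h : ∀ x y, inner' 𝕜 x (A y) = inner' 𝕜 (B x) y) : Continuous A := by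
  apply LinearMap.continuous_of_isClosed_graph
  have hgraph : (A.graph : Set (H 𝕜 × H 𝕜)) =
      ⋂ n, {p | inner' 𝕜 (e 𝕜 n) p.2 = inner' 𝕜 (B (e 𝕜 n)) p.1} := by
    ext p
    simp only [SetLike.mem_coe, LinearMap.mem_graph_iff, Set.mem_iInter, Set.mem_ofPred_eq,
      inner'_e_left, ← apply_eq_inner'_of_adjoint h]
    exact ⟨fun hp n => by rw [hp], fun hp => ZeroAtInftyContinuousMap.ext fun n => hp n⟩
  rw [hgraph]
  exact isClosed_iInter fun n => isClosed_eq
    ((continuous_inner'_right _).comp continuous_snd)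
    ((continuous_inner'_right _).comp continuous_fst)

end Adjoint

/-- A surjective inner-product-preserving everywhere-defined linear map is an adjointable
top-linear isomorphism whose adjoint is its inverse, and its norm is at least 1. -/
theorem stmt6 (A : H K →ₗ[K] H K) (hsurj : Function.Surjective A)
    (hip : ∀ x y : H K, inner' K (A x) (A y) = inner' K x y) :
    Continuous A ∧ Function.Bijective A ∧
    ∃ B T : H K →L[K] H K, (∀ x : H K, T x = A x) ∧
      (∀ x : H K, B (A x) = x) ∧ (∀ x : H K, A (B x) = x) ∧
      (∀ x y : H K, inner' K x (A y) = inner' K (B x) y) ∧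
      ‖T‖ = ‖B‖ ∧ 1 ≤ ‖T‖ := by
  have hbij : Function.Bijective A := ⟨injective_of_inner'_map_map A hip, hsurj⟩
  set E := LinearEquiv.ofBijective A hbij
  have hA_symm : ∀ x, A (E.symm x) = x := E.apply_symm_apply
  have hAE : ∀ x y, inner' K x (A y) = inner' K (E.symm x) y := fun x y => by
    rw [← hip (E.symm x), hA_symm]
  have hEA : ∀ x y, inner' K x (E.symm y) = inner' K (A x) y := fun x y => by
    rw [← hip x (E.symm y), hA_symm]
  let T : H K →L[K] H K := ⟨A, continuous_of_inner'_adjoint A E.symm.toLinearMap hAE⟩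
  let B : H K →L[K] H K := ⟨E.symm.toLinearMap,
    continuous_of_inner'_adjoint E.symm.toLinearMap A hEA⟩
  have hnorm : ‖T‖ = ‖B‖ :=
    le_antisymm (opNorm_le_of_inner'_adjoint T B hAE) (opNorm_le_of_inner'_adjoint B T hEA)
  have hBT : B.comp T = ContinuousLinearMap.id K (H K) := by
    ext x : 1
    exact E.symm_apply_apply x
  have hone : 1 ≤ ‖T‖ * ‖T‖ := by
    simpa [hBT, hnorm] using B.opNorm_comp_le T
  refine ⟨T.continuous, hbij, B, T, fun _ => rfl, E.symm_apply_apply, E.apply_symm_apply, hAE,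
    hnorm, ?_⟩
  nlinarith [norm_nonneg T]
end
end

section
/- (Theorem 6.31: the trace class is the closure of the block-finite operators.) Call T : H →L[K] H block-finite (with respect to the standard basis) if there exists k : ℕ such that (T (e n)) m = 0 whenever max m n > k. Then the set of trace class operators {T : H →L[K] H | Tendsto (fun q : ℕ × ℕ => (T (e q.2)) q.1) Filter.cofinite (nhds 0)} equals the closure, in the operator-norm topology of H →L[K] H, of the set of block-finite operators {T : H →L[K] H | ∃ k : ℕ, ∀ m n : ℕ, k < max m n → (T (e n)) m = 0}. -/
/-!
Matrix entries are bounded by the operator norm, so a norm limit of operators whose entries tend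
to zero along the cofinite filter again has this property, and block-finite operators have it
trivially. Conversely, over an ultrametric field the operator norm is bounded by the supremum of
the entries, so the corner truncations `P_k T P_k` of a trace class operator `T` converge to `T`.
-/

open Filter

noncomputable section

variable (K : Type*) [NontriviallyNormedField K] [IsUltrametricDist K]
  [CompleteSpace K] [StarRing K] [NormedStarGroup K]

namespace ZeroAtInftyContinuousMap

open scoped ZeroAtInfty

variable {α β : Type*} [TopologicalSpace α] [SeminormedAddCommGroup β]

theorem norm_coe_le_norm (f : C₀(α, β)) (a : α) : ‖f a‖ ≤ ‖f‖ :=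
  f.toBCF.norm_coe_le_norm a

theorem norm_le_of_forall_le {f : C₀(α, β)} {C : ℝ} (hC : 0 ≤ C) (h : ∀ a, ‖f a‖ ≤ C) :
    ‖f‖ ≤ C :=
  (BoundedContinuousFunction.norm_le hC).mpr h

variable (𝕜 : Type*) [NormedField 𝕜] [NormedSpace 𝕜 β]

def evalCLM (a : α) : C₀(α, β) →L[𝕜] β :=
  LinearMap.mkContinuous
    { toFun := fun f => f a
      map_add' := fun _ _ => rfl
      map_smul' := fun _ _ => rfl }
    1 fun f => by simpa using norm_coe_le_norm f a

@[simp]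
theorem evalCLM_apply (a : α) (f : C₀(α, β)) : evalCLM 𝕜 a f = f a := rfl

end ZeroAtInftyContinuousMap

section

open ZeroAtInftyContinuousMap Topology

theorem Nat.eventually_cofinite_prod_iff {p : ℕ × ℕ → Prop} :
    (∀ᶠ q in cofinite, p q) ↔ ∃ k, ∀ m n, k < max m n → p (m, n) := by
  rw [eventually_cofinite]
  constructor
  · intro hfin
    obtain ⟨⟨a, b⟩, hab⟩ := hfin.bddAbove
    refine ⟨max a b, fun m n hk => by_contra fun hp => ?_⟩
    have : m ≤ a ∧ n ≤ b := hab hp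
    omega
  · rintro ⟨k, hk⟩
    refine (Set.finite_Iic (k, k)).subset fun q hq => by_contra fun hq' => hq (hk q.1 q.2 ?_)
    simp only [Set.mem_Iic, Prod.le_def, not_and_or, not_le] at hq'
    exact lt_max_iff.2 hq'

variable {𝕜 : Type*} [NontriviallyNormedField 𝕜]

theorem e_apply (n m : ℕ) : e 𝕜 n m = if m = n then 1 else 0 := rfl

theorem norm_e_le (n : ℕ) : ‖e 𝕜 n‖ ≤ 1 :=
  norm_le_of_forall_le zero_le_one fun m => by rw [e_apply]; split_ifs <;> simp

theorem norm_entry_le_opNorm (T : H 𝕜 →L[𝕜] H 𝕜) (m n : ℕ) : ‖T (e 𝕜 n) m‖ ≤ ‖T‖ :=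
  (norm_coe_le_norm _ m).trans <| by simpa using T.le_opNorm_of_le (norm_e_le n)

def truncate (k : ℕ) : H 𝕜 →L[𝕜] H 𝕜 :=
  ∑ n ∈ Finset.range (k + 1), (evalCLM 𝕜 n).smulRight (e 𝕜 n)

theorem truncate_apply_eq_sum (k : ℕ) (x : H 𝕜) :
    truncate k x = ∑ n ∈ Finset.range (k + 1), x n • e 𝕜 n := by
  simp [truncate]

theorem truncate_apply (k : ℕ) (x : H 𝕜) (m : ℕ) :
    truncate k x m = if m ≤ k then x m else 0 := by
  rw [← evalCLM_apply 𝕜, truncate_apply_eq_sum, map_sum]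
  simp [e_apply]

theorem truncate_e (k n : ℕ) : truncate k (e 𝕜 n) = if n ≤ k then e 𝕜 n else 0 := by
  ext m
  rw [truncate_apply]
  split_ifs <;> simp [e_apply] <;> omega

theorem tendsto_truncate (x : H 𝕜) : Tendsto (fun k => truncate k x) atTop (𝓝 x) := by
  have hx : Tendsto x atTop (𝓝 0) := cocompact_eq_atTop (α := ℕ) ▸ x.zero_at_infty'
  refine Metric.tendsto_atTop.2 fun ε hε => ?_
  obtain ⟨N, hN⟩ := Metric.tendsto_atTop.1 hx (ε / 2) (half_pos hε)
  refine ⟨N, fun k hk => (le_of_eq_of_le (dist_eq_norm _ _) ?_).trans_lt (half_lt_self hε)⟩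
  refine norm_le_of_forall_le (half_pos hε).le fun m => ?_
  rw [coe_sub, Pi.sub_apply, truncate_apply]
  split_ifs with hm
  · simp [(half_pos hε).le]
  · simpa using (hN m (by omega)).le

theorem opNorm_le_of_forall_norm_entry_le [IsUltrametricDist 𝕜] (T : H 𝕜 →L[𝕜] H 𝕜) {C : ℝ}
    (hC : 0 ≤ C) (h : ∀ m n, ‖T (e 𝕜 n) m‖ ≤ C) : ‖T‖ ≤ C := by
  refine T.opNorm_le_bound hC fun x => ?_
  -- On finitely supported vectors the ultrametric inequality bounds each coordinate of `T x` by
  -- `max_n ‖x n‖ ‖T_mn‖`; these vectors are dense.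
  have hbound (k : ℕ) : ‖T (truncate k x)‖ ≤ C * ‖x‖ := by
    refine norm_le_of_forall_le (by positivity) fun m => ?_
    rw [← evalCLM_apply 𝕜, truncate_apply_eq_sum, map_sum, map_sum]
    refine IsUltrametricDist.norm_sum_le_of_forall_le_of_nonneg (by positivity) fun n _ => ?_
    rw [map_smul, map_smul, norm_smul, mul_comm]
    exact mul_le_mul (h m n) (norm_coe_le_norm x n) (norm_nonneg _) hC
  exact le_of_tendsto ((T.continuous.norm.tendsto x).comp (tendsto_truncate x))
    (Eventually.of_forall hbound)

def IsBlockFinite (T : H 𝕜 →L[𝕜] H 𝕜) : Prop :=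
  ∃ k, ∀ m n, k < max m n → T (e 𝕜 n) m = 0

theorem IsBlockFinite.isTraceClass {T : H 𝕜 →L[𝕜] H 𝕜} (hT : IsBlockFinite T) :
    IsTraceClass 𝕜 T :=
  tendsto_nhds_of_eventually_eq (Nat.eventually_cofinite_prod_iff.2 hT)

theorem isClosed_setOf_isTraceClass : IsClosed {T : H 𝕜 →L[𝕜] H 𝕜 | IsTraceClass 𝕜 T} := by
  refine isClosed_of_closure_subset fun T hT => Metric.tendsto_nhds.2 fun ε hε => ?_
  obtain ⟨S, hS, hTS⟩ := (Metric.mem_closure_iff (α := H 𝕜 →L[𝕜] H 𝕜)).1 hT (ε / 2) (half_pos hε)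
  filter_upwards [Metric.tendsto_nhds.1 hS (ε / 2) (half_pos hε)] with q hq
  rw [dist_zero_right] at hq ⊢
  rw [dist_eq_norm T S] at hTS
  calc ‖T (e 𝕜 q.2) q.1‖ = ‖(T - S) (e 𝕜 q.2) q.1 + S (e 𝕜 q.2) q.1‖ := by simp
    _ ≤ ‖T - S‖ + ‖S (e 𝕜 q.2) q.1‖ := norm_add_le_of_le (norm_entry_le_opNorm _ _ _) le_rfl
    _ < ε := by linarith

def blockTruncate (k : ℕ) (T : H 𝕜 →L[𝕜] H 𝕜) : H 𝕜 →L[𝕜] H 𝕜 :=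
  truncate k ∘L T ∘L truncate k

theorem blockTruncate_entry (k : ℕ) (T : H 𝕜 →L[𝕜] H 𝕜) (m n : ℕ) :
    blockTruncate k T (e 𝕜 n) m = if max m n ≤ k then T (e 𝕜 n) m else 0 := by
  simp only [blockTruncate, ContinuousLinearMap.comp_apply, truncate_e, truncate_apply]
  split_ifs <;> simp_all <;> omega

theorem isBlockFinite_blockTruncate (k : ℕ) (T : H 𝕜 →L[𝕜] H 𝕜) :
    IsBlockFinite (blockTruncate k T) :=
  ⟨k, fun m n hk => by rw [blockTruncate_entry, if_neg hk.not_ge]⟩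

theorem IsTraceClass.tendsto_blockTruncate [IsUltrametricDist 𝕜] {T : H 𝕜 →L[𝕜] H 𝕜}
    (hT : IsTraceClass 𝕜 T) : Tendsto (fun k => blockTruncate k T) atTop (𝓝 T) := by
  refine (Metric.tendsto_atTop (α := H 𝕜 →L[𝕜] H 𝕜) (β := ℕ)).2 fun ε hε => ?_
  obtain ⟨N, hN⟩ := Nat.eventually_cofinite_prod_iff.1
    (Metric.tendsto_nhds.1 hT (ε / 2) (half_pos hε))
  refine ⟨N, fun k hk => ?_⟩
  rw [dist_comm, dist_eq_norm T]
  refine (opNorm_le_of_forall_norm_entry_le _ (half_pos hε).le fun m n => ?_).trans_lt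
    (half_lt_self hε)
  rw [_root_.sub_apply, coe_sub, Pi.sub_apply, blockTruncate_entry]
  split_ifs with hmn
  · simp [(half_pos hε).le]
  · simpa using (hN m n (by omega)).le

end

/-- The trace class is the operator-norm closure of the block-finite operators. -/
theorem stmt17 :
    {T : H K →L[K] H K |
        Tendsto (fun q : ℕ × ℕ => (T (e K q.2)) q.1) Filter.cofinite (nhds 0)} =
      closure {T : H K →L[K] H K |
        ∃ k : ℕ, ∀ m n : ℕ, k < max m n → (T (e K n)) m = 0} :=
  Set.Subset.antisymm
    (fun _ hT => mem_closure_of_tendsto (IsTraceClass.tendsto_blockTruncate hT)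
      (Eventually.of_forall fun k => isBlockFinite_blockTruncate k _))
    (closure_minimal (fun _ => IsBlockFinite.isTraceClass) isClosed_setOf_isTraceClass)
end
end
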